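/- Let α, β ∈ π. For all h ∈ H_α one has (1_α ⊗ S_β⁻¹(h_{(2,β⁻¹)})) · J^R_{α,β} · Δ_{α,β}(h_{(1,αβ)}) = (h ⊗ 1_β) · J^R_{α,β}, where h_{(1,αβ)} ⊗ h_{(2,β⁻¹)} = Δ_{αβ,β⁻¹}(h). -/

import Mathlib

open scoped TensorProduct
open TensorProduct

universe u v
set_option maxHeartbeats 1000000

section QH
variable (k : Type u) [Field k] {π : Type v} [Group π]
variable (H : π → Type u) [∀ a, Ring (H a)] [∀ a, Algebra k (H a)]

/-- Transport along equality of group elements, as a `k`-linear map. -/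
def castL {a b : π} (e : a = b) : H a →ₗ[k] H b := by subst e; exact LinearMap.id

/-- Transport along equality of group elements, as a `k`-algebra map. -/
def castA {a b : π} (e : a = b) : H a →ₐ[k] H b := by subst e; exact AlgHom.id k _

/-- A quasi-Hopf `π`-coalgebra (quasi-Turaev group coalgebra without the crossing):
a family of `k`-algebras `{H α}` with comultiplications `Δ_{α,β}`, counit `ε`,
invertible associators `Φ_{α,β,γ}`, antipodes `S_α` and elements `p_α, q_α`. -/
structure QuasiHopfGCoalgebra where
  /-- comultiplication -/
  Δ : ∀ a b : π, H (a * b) →ₐ[k] (H a ⊗[k] H b)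
  /-- counit -/
  ε : H 1 →ₐ[k] k
  /-- the associator `Φ_{α,β,γ} ∈ H_α ⊗ H_β ⊗ H_γ` -/
  Φ : ∀ a b c : π, H a ⊗[k] (H b ⊗[k] H c)
  /-- the inverse associator -/
  Φinv : ∀ a b c : π, H a ⊗[k] (H b ⊗[k] H c)
  Φ_mul_Φinv : ∀ a b c : π, Φ a b c * Φinv a b c = 1
  Φinv_mul_Φ : ∀ a b c : π, Φinv a b c * Φ a b c = 1
  /-- the antipode, a family of bijective `k`-linear maps -/
  S : ∀ a : π, H a ≃ₗ[k] H a⁻¹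
  S_one : ∀ a : π, S a 1 = 1
  /-- the antipode is anti-multiplicative -/
  S_mul : ∀ (a : π) (x y : H a), S a (x * y) = S a y * S a x
  p : ∀ a : π, H a
  q : ∀ a : π, H a
  /-- quasi-coassociativity:
  `(id ⊗ Δ_{β,γ})Δ_{α,βγ}(h) ⬝ Φ_{α,β,γ} = Φ_{α,β,γ} ⬝ (Δ_{α,β} ⊗ id)Δ_{αβ,γ}(h)` -/
  coassoc : ∀ (a b c : π) (h : H (a * b * c)),
    (TensorProduct.map LinearMap.id (Δ b c).toLinearMap)
        ((Δ a (b * c)) (castL k H (mul_assoc a b c) h)) * Φ a b c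
      = Φ a b c *
        (TensorProduct.assoc k (H a) (H b) (H c))
          ((TensorProduct.map (Δ a b).toLinearMap LinearMap.id) ((Δ (a * b) c) h))
  /-- right counit law `(id ⊗ ε)Δ_{α,1} = id` -/
  counit_right : ∀ (a : π) (h : H a),
    (TensorProduct.rid k (H a))
      ((TensorProduct.map LinearMap.id (ε : H 1 →ₗ[k] k))
        ((Δ a 1) (castL k H (mul_one a).symm h))) = h
  /-- left counit law `(ε ⊗ id)Δ_{1,α} = id` -/
  counit_left : ∀ (a : π) (h : H a),
    (TensorProduct.lid k (H a))
      ((TensorProduct.map (ε : H 1 →ₗ[k] k) LinearMap.id)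
        ((Δ 1 a) (castL k H (one_mul a).symm h))) = h
  /-- the pentagon identity -/
  pentagon : ∀ a b c d : π,
    ((1 : H a) ⊗ₜ[k] Φ b c d) *
      (TensorProduct.map LinearMap.id
          ((TensorProduct.assoc k (H b) (H c) (H d)).toLinearMap ∘ₗ
            TensorProduct.map (Δ b c).toLinearMap LinearMap.id)
        (Φ a (b * c) d)) *
      ((TensorProduct.map LinearMap.id (TensorProduct.assoc k (H b) (H c) (H d)).toLinearMap)
        ((TensorProduct.assoc k (H a) (H b ⊗[k] H c) (H d)) ((Φ a b c) ⊗ₜ[k] (1 : H d))))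
    = (TensorProduct.map LinearMap.id
          (TensorProduct.map LinearMap.id (Δ c d).toLinearMap) (Φ a b (c * d))) *
      ((TensorProduct.assoc k (H a) (H b) (H c ⊗[k] H d))
        ((TensorProduct.map (Δ a b).toLinearMap LinearMap.id) (Φ (a * b) c d)))
  /-- normalization `(id ⊗ ε ⊗ id)(Φ_{α,1,β}) = 1 ⊗ 1` -/
  Φ_normal : ∀ a b : π,
    (TensorProduct.map LinearMap.id
      ((TensorProduct.lid k (H b)).toLinearMap ∘ₗ
        TensorProduct.map (ε : H 1 →ₗ[k] k) LinearMap.id) (Φ a 1 b)) = (1 : H a ⊗[k] H b)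
  /-- `S_α(h₁) p_{α⁻¹} h₂ = ε(h) p_{α⁻¹}` for `h ∈ H_1` -/
  antipode_p : ∀ (a : π) (h : H 1),
    (LinearMap.mul' k (H a⁻¹) ∘ₗ
        TensorProduct.map (LinearMap.mulRight k (p a⁻¹) ∘ₗ (S a).toLinearMap) LinearMap.id)
      ((Δ a a⁻¹) (castL k H (mul_inv_cancel a).symm h)) = ε h • p a⁻¹
  /-- `h₁ q_α S_{α⁻¹}(h₂) = ε(h) q_α` for `h ∈ H_1` -/
  antipode_q : ∀ (a : π) (h : H 1),
    (LinearMap.mul' k (H a) ∘ₗ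
        TensorProduct.map (LinearMap.mulRight k (q a))
          (castL k H (inv_inv a) ∘ₗ (S a⁻¹).toLinearMap))
      ((Δ a a⁻¹) (castL k H (mul_inv_cancel a).symm h)) = ε h • q a
  /-- `Y¹_α q_α S_{α⁻¹}(Y²_{α⁻¹}) p_α Y³_α = 1_α` where `Φ_{α,α⁻¹,α} = Y¹ ⊗ Y² ⊗ Y³` -/
  antipode_Φ : ∀ a : π,
    (LinearMap.mul' k (H a) ∘ₗ
      TensorProduct.map (LinearMap.mulRight k (q a))
        (LinearMap.mul' k (H a) ∘ₗ
          TensorProduct.map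
            (LinearMap.mulRight k (p a) ∘ₗ castL k H (inv_inv a) ∘ₗ (S a⁻¹).toLinearMap)
            LinearMap.id))
      (Φ a a⁻¹ a) = 1
  /-- `S_{α⁻¹}(y¹_{α⁻¹}) p_α y²_α q_α S_{α⁻¹}(y³_{α⁻¹}) = 1_α`
  where `Φ⁻¹_{α⁻¹,α,α⁻¹} = y¹ ⊗ y² ⊗ y³` -/
  antipode_Φinv : ∀ a : π,
    (LinearMap.mul' k (H a) ∘ₗ
      TensorProduct.map
        (LinearMap.mulRight k (p a) ∘ₗ castL k H (inv_inv a) ∘ₗ (S a⁻¹).toLinearMap)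
        (LinearMap.mul' k (H a) ∘ₗ
          TensorProduct.map (LinearMap.mulRight k (q a))
            (castL k H (inv_inv a) ∘ₗ (S a⁻¹).toLinearMap)))
      (Φinv a⁻¹ a a⁻¹) = 1

namespace QuasiHopfGCoalgebra
variable {k H}
variable (T : QuasiHopfGCoalgebra k H)

/-- `I^R_{α,β} = y¹_α ⊗ y²_β q_β S_{β⁻¹}(y³_{β⁻¹})` where `Φ⁻¹_{α,β,β⁻¹} = y¹ ⊗ y² ⊗ y³` -/
noncomputable def IR (a b : π) : H a ⊗[k] H b :=
  TensorProduct.map LinearMap.id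
    (LinearMap.mul' k (H b) ∘ₗ
      TensorProduct.map (LinearMap.mulRight k (T.q b))
        (castL k H (inv_inv b) ∘ₗ (T.S b⁻¹).toLinearMap))
    (T.Φinv a b b⁻¹)

/-- `J^R_{α,β} = Y¹_α ⊗ S_β⁻¹(p_{β⁻¹} Y³_{β⁻¹}) Y²_β` where `Φ_{α,β,β⁻¹} = Y¹ ⊗ Y² ⊗ Y³` -/
noncomputable def JR (a b : π) : H a ⊗[k] H b :=
  TensorProduct.map LinearMap.id
    (LinearMap.mul' k (H b) ∘ₗ
      TensorProduct.map ((T.S b).symm.toLinearMap ∘ₗ LinearMap.mulLeft k (T.p b⁻¹))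
          LinearMap.id ∘ₗ
        (TensorProduct.comm k (H b) (H b⁻¹)).toLinearMap)
    (T.Φ a b b⁻¹)

/-- `I^L_{α,β} = Y²_α S_α⁻¹(Y¹_{α⁻¹} q_{α⁻¹}) ⊗ Y³_β` where `Φ_{α⁻¹,α,β} = Y¹ ⊗ Y² ⊗ Y³` -/
noncomputable def IL (a b : π) : H a ⊗[k] H b :=
  TensorProduct.map (LinearMap.mul' k (H a)) LinearMap.id
    ((TensorProduct.assoc k (H a) (H a) (H b)).symm
      ((TensorProduct.leftComm k (H a) (H a) (H b))
        (TensorProduct.map ((T.S a).symm.toLinearMap ∘ₗ LinearMap.mulRight k (T.q a⁻¹))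
          LinearMap.id (T.Φ a⁻¹ a b))))

/-- `J^L_{α,β} = S_{α⁻¹}(y¹_{α⁻¹}) p_α y²_α ⊗ y³_β` where `Φ⁻¹_{α⁻¹,α,β} = y¹ ⊗ y² ⊗ y³` -/
noncomputable def JL (a b : π) : H a ⊗[k] H b :=
  TensorProduct.map (LinearMap.mul' k (H a)) LinearMap.id
    ((TensorProduct.assoc k (H a) (H a) (H b)).symm
      (TensorProduct.map
        (LinearMap.mulRight k (T.p a) ∘ₗ castL k H (inv_inv a) ∘ₗ (T.S a⁻¹).toLinearMap)
        LinearMap.id (T.Φinv a⁻¹ a b)))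

/-- the map `x ⊗ y ↦ Δ_{α,β}(x) ⬝ I^R_{α,β} ⬝ (1_α ⊗ S_{β⁻¹}(y))` -/
noncomputable def lmapIR (a b : π) : (H (a * b) ⊗[k] H b⁻¹) →ₗ[k] (H a ⊗[k] H b) :=
  LinearMap.mul' k (H a ⊗[k] H b) ∘ₗ
    TensorProduct.map
      (LinearMap.mulRight k (T.IR a b) ∘ₗ (T.Δ a b).toLinearMap)
      (TensorProduct.mk k (H a) (H b) 1 ∘ₗ castL k H (inv_inv b) ∘ₗ (T.S b⁻¹).toLinearMap)

/-- the map `x ⊗ y ↦ (1_α ⊗ S_β⁻¹(y)) ⬝ J^R_{α,β} ⬝ Δ_{α,β}(x)` -/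
noncomputable def lmapJR (a b : π) : (H (a * b) ⊗[k] H b⁻¹) →ₗ[k] (H a ⊗[k] H b) :=
  LinearMap.mul' k (H a ⊗[k] H b) ∘ₗ
    TensorProduct.map
      (TensorProduct.mk k (H a) (H b) 1 ∘ₗ (T.S b).symm.toLinearMap)
      (LinearMap.mulLeft k (T.JR a b) ∘ₗ (T.Δ a b).toLinearMap) ∘ₗ
    (TensorProduct.comm k (H (a * b)) (H b⁻¹)).toLinearMap

/-- the map `x ⊗ y ↦ Δ_{α,β}(y) ⬝ I^L_{α,β} ⬝ (S_α⁻¹(x) ⊗ 1_β)` -/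
noncomputable def lmapIL (a b : π) : (H a⁻¹ ⊗[k] H (a * b)) →ₗ[k] (H a ⊗[k] H b) :=
  LinearMap.mul' k (H a ⊗[k] H b) ∘ₗ
    TensorProduct.map
      (LinearMap.mulRight k (T.IL a b) ∘ₗ (T.Δ a b).toLinearMap)
      ((TensorProduct.mk k (H a) (H b)).flip 1 ∘ₗ (T.S a).symm.toLinearMap) ∘ₗ
    (TensorProduct.comm k (H a⁻¹) (H (a * b))).toLinearMap

/-- the map `x ⊗ y ↦ (S_{α⁻¹}(x) ⊗ 1_β) ⬝ J^L_{α,β} ⬝ Δ_{α,β}(y)` -/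
noncomputable def lmapJL (a b : π) : (H a⁻¹ ⊗[k] H (a * b)) →ₗ[k] (H a ⊗[k] H b) :=
  LinearMap.mul' k (H a ⊗[k] H b) ∘ₗ
    TensorProduct.map
      ((TensorProduct.mk k (H a) (H b)).flip 1 ∘ₗ
        castL k H (inv_inv a) ∘ₗ (T.S a⁻¹).toLinearMap)
      (LinearMap.mulLeft k (T.JL a b) ∘ₗ (T.Δ a b).toLinearMap)

end QuasiHopfGCoalgebra
end QH

/-!
Write `J^R_{α,β} = (id ⊗ G)(Φ_{α,β,β⁻¹})` with `G(v ⊗ w) = S_β⁻¹(p_{β⁻¹} w) v`. Since `S_β⁻¹` is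
anti-multiplicative, `G(X ⬝ (v ⊗ y)) = S_β⁻¹(y) G(X) v`, so the left-hand side equals
`(id ⊗ G)(Φ ⬝ (Δ ⊗ id)Δ(h))`. Quasi-coassociativity turns this into `(id ⊗ G)((id ⊗ Δ)Δ(h) ⬝ Φ)`.
As `G = S_β⁻¹ ∘ (v ⊗ w ↦ S_β(v) p_{β⁻¹} w)`, the antipode axiom for `p` gives
`G(Δ(g) X) = ε(g) G(X)`, and the counit law collapses `(id ⊗ ε)Δ(h)` to `h`.
-/

section Cast
variable {k : Type u} [Field k] {π : Type v}
variable {H : π → Type u} [∀ a, Ring (H a)] [∀ a, Algebra k (H a)]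

@[simp]
lemma castL_rfl {a : π} (e : a = a) (x : H a) : castL k H e x = x := rfl

@[simp]
lemma castL_castL {a b c : π} (e₁ : a = b) (e₂ : b = c) (x : H a) :
    castL k H e₂ (castL k H e₁ x) = castL k H (e₁.trans e₂) x := by
  subst e₁ e₂; rfl

end Cast

namespace QuasiHopfGCoalgebra
variable {k : Type u} [Field k] {π : Type v} [Group π]
variable {H : π → Type u} [∀ a, Ring (H a)] [∀ a, Algebra k (H a)]
variable (T : QuasiHopfGCoalgebra k H)

lemma S_symm_mul (a : π) (x y : H a⁻¹) :
    (T.S a).symm (x * y) = (T.S a).symm y * (T.S a).symm x :=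
  (T.S a).injective <| by simp only [S_mul, LinearEquiv.apply_symm_apply]

lemma map_castL_Δ (a : π) {c c' : π} (e : c = c') (e' : a * c = a * c') (x : H (a * c)) :
    TensorProduct.map LinearMap.id (castL k H e) (T.Δ a c x) = T.Δ a c' (castL k H e' x) := by
  subst e
  exact congrFun (congrArg DFunLike.coe (TensorProduct.map_id (R := k))) _

noncomputable def contractJR (b : π) : H b ⊗[k] H b⁻¹ →ₗ[k] H b :=
  LinearMap.mul' k (H b) ∘ₗ
    TensorProduct.map ((T.S b).symm.toLinearMap ∘ₗ LinearMap.mulLeft k (T.p b⁻¹)) LinearMap.id ∘ₗ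
      (TensorProduct.comm k (H b) (H b⁻¹)).toLinearMap

lemma JR_eq_map_contractJR (a b : π) :
    T.JR a b = TensorProduct.map LinearMap.id (T.contractJR b) (T.Φ a b b⁻¹) := rfl

@[simp]
lemma contractJR_tmul (b : π) (v : H b) (w : H b⁻¹) :
    T.contractJR b (v ⊗ₜ w) = (T.S b).symm (T.p b⁻¹ * w) * v := by
  simp [contractJR]

lemma contractJR_mul_tmul (b : π) (X : H b ⊗[k] H b⁻¹) (v : H b) (y : H b⁻¹) :
    T.contractJR b (X * (v ⊗ₜ y)) = (T.S b).symm y * T.contractJR b X * v := by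
  induction X using TensorProduct.induction_on with
  | zero => simp
  | add X Y hX hY => simp only [add_mul, map_add, hX, hY, mul_add]
  | tmul x w =>
    simp only [Algebra.TensorProduct.tmul_mul_tmul, contractJR_tmul, ← mul_assoc, S_symm_mul]

lemma contractJR_eq_symm_S_comp (b : π) :
    T.contractJR b = (T.S b).symm.toLinearMap ∘ₗ LinearMap.mul' k (H b⁻¹) ∘ₗ
      TensorProduct.map (LinearMap.mulRight k (T.p b⁻¹) ∘ₗ (T.S b).toLinearMap) LinearMap.id := by
  ext v w
  simp [S_symm_mul, mul_assoc]

lemma contractJR_Δ (b : π) (g : H (b * b⁻¹)) :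
    T.contractJR b (T.Δ b b⁻¹ g) =
      T.ε (castL k H (mul_inv_cancel b) g) • (T.S b).symm (T.p b⁻¹) := by
  have := T.antipode_p b (castL k H (mul_inv_cancel b) g)
  rw [castL_castL, castL_rfl] at this
  rw [contractJR_eq_symm_S_comp, LinearMap.comp_apply, this, LinearEquiv.coe_coe, map_smul]

lemma contractJR_Δ_mul (b : π) (g : H (b * b⁻¹)) (X : H b ⊗[k] H b⁻¹) :
    T.contractJR b (T.Δ b b⁻¹ g * X) =
      T.ε (castL k H (mul_inv_cancel b) g) • T.contractJR b X := by
  induction X using TensorProduct.induction_on with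
  | zero => simp
  | add X Y hX hY => simp only [mul_add, map_add, hX, hY, smul_add]
  | tmul v w =>
    rw [contractJR_mul_tmul, contractJR_Δ, contractJR_tmul, S_symm_mul]
    simp only [mul_smul_comm, smul_mul_assoc, mul_assoc]

lemma map_contractJR_mul_assoc_tmul (a b : π) (X : H a ⊗[k] (H b ⊗[k] H b⁻¹))
    (s : H a ⊗[k] H b) (y : H b⁻¹) :
    TensorProduct.map LinearMap.id (T.contractJR b) (X * TensorProduct.assoc k _ _ _ (s ⊗ₜ y))
      = (1 ⊗ₜ (T.S b).symm y) * (TensorProduct.map LinearMap.id (T.contractJR b) X * s) := by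
  induction s using TensorProduct.induction_on with
  | zero => simp
  | add s s' hs hs' => simp only [TensorProduct.add_tmul, map_add, mul_add, hs, hs']
  | tmul u v =>
    induction X using TensorProduct.induction_on with
    | zero => simp
    | add X Y hX hY => simp only [add_mul, map_add, hX, hY, mul_add]
    | tmul x W =>
      simp only [TensorProduct.assoc_tmul, Algebra.TensorProduct.tmul_mul_tmul,
        TensorProduct.map_tmul, LinearMap.id_coe, id_eq, contractJR_mul_tmul, one_mul, mul_assoc]

lemma lmapJR_tmul (a b : π) (x : H (a * b)) (y : H b⁻¹) :
    T.lmapJR a b (x ⊗ₜ y) = (1 ⊗ₜ (T.S b).symm y) * (T.JR a b * T.Δ a b x) := rfl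

lemma lmapJR_eq_map_contractJR (a b : π) (t : H (a * b) ⊗[k] H b⁻¹) :
    T.lmapJR a b t = TensorProduct.map LinearMap.id (T.contractJR b)
      (T.Φ a b b⁻¹ * TensorProduct.assoc k _ _ _ (TensorProduct.map (T.Δ a b).toLinearMap
        LinearMap.id t)) := by
  induction t using TensorProduct.induction_on with
  | zero => simp
  | add t t' ht ht' => simp only [map_add, mul_add, ht, ht']
  | tmul x y =>
    rw [lmapJR_tmul, TensorProduct.map_tmul, map_contractJR_mul_assoc_tmul, JR_eq_map_contractJR]
    rfl

noncomputable def rightCounit (a : π) {c : π} (hc : c = 1) : H a ⊗[k] H c →ₗ[k] H a :=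
  (TensorProduct.rid k (H a)).toLinearMap ∘ₗ
    TensorProduct.map LinearMap.id ((T.ε : H 1 →ₗ[k] k) ∘ₗ castL k H hc)

@[simp]
lemma rightCounit_tmul (a : π) {c : π} (hc : c = 1) (x : H a) (g : H c) :
    T.rightCounit a hc (x ⊗ₜ g) = T.ε (castL k H hc g) • x := by
  simp [rightCounit]

lemma rightCounit_Δ (a : π) {c : π} (hc : c = 1) (e : a = a * c) (h : H a) :
    T.rightCounit a hc (T.Δ a c (castL k H e h)) = h := by
  have hmap : TensorProduct.map LinearMap.id ((T.ε : H 1 →ₗ[k] k) ∘ₗ castL k H hc) =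
      TensorProduct.map LinearMap.id (T.ε : H 1 →ₗ[k] k) ∘ₗ
        TensorProduct.map (LinearMap.id : H a →ₗ[k] H a) (castL k H hc) := by
    rw [← TensorProduct.map_comp, LinearMap.id_comp]
  rw [rightCounit, LinearMap.comp_apply, hmap, LinearMap.comp_apply,
    map_castL_Δ T a hc (by rw [hc]), castL_castL]
  exact T.counit_right a h

lemma map_contractJR_map_Δ_mul (a b : π) (D : H a ⊗[k] H (b * b⁻¹))
    (X : H a ⊗[k] (H b ⊗[k] H b⁻¹)) :
    TensorProduct.map LinearMap.id (T.contractJR b)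
        (TensorProduct.map LinearMap.id (T.Δ b b⁻¹).toLinearMap D * X)
      = (T.rightCounit a (mul_inv_cancel b) D ⊗ₜ 1) *
        TensorProduct.map LinearMap.id (T.contractJR b) X := by
  induction D using TensorProduct.induction_on with
  | zero => simp
  | add D D' hD hD' => simp only [map_add, add_mul, hD, hD', TensorProduct.add_tmul]
  | tmul x g =>
    induction X using TensorProduct.induction_on with
    | zero => simp
    | add X Y hX hY => simp only [mul_add, map_add, hX, hY]
    | tmul y W =>
      simp [contractJR_Δ_mul, TensorProduct.smul_tmul']

end QuasiHopfGCoalgebra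

section Statements
variable {k : Type u} [Field k] {π : Type v} [Group π]
variable {H : π → Type u} [∀ a, Ring (H a)] [∀ a, Algebra k (H a)]

/-- For all `h ∈ H_α`:
`(1_α ⊗ S_β⁻¹(h₍₂,β⁻¹₎)) ⬝ J^R_{α,β} ⬝ Δ_{α,β}(h₍₁,αβ₎) = (h ⊗ 1_β) ⬝ J^R_{α,β}`
where `h₍₁,αβ₎ ⊗ h₍₂,β⁻¹₎ = Δ_{αβ,β⁻¹}(h)`. -/
theorem JR_absorb (T : QuasiHopfGCoalgebra k H) (a b : π) (h : H a) :
    T.lmapJR a b ((T.Δ (a * b) b⁻¹) (castL k H (mul_inv_cancel_right a b).symm h))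
      = (h ⊗ₜ[k] (1 : H b)) * T.JR a b := by
  rw [T.lmapJR_eq_map_contractJR, ← T.coassoc a b b⁻¹, castL_castL, T.map_contractJR_map_Δ_mul,
    ← T.JR_eq_map_contractJR, T.rightCounit_Δ]

end Statements
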